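/- arXiv:2209.11918 — 3 statements merged into one kernel-verified Lean document; each statement's English description precedes it below -/
import Mathlib

section
/- For every real number x with 0 ≤ x < 1, the weighted integral (2/π) ∫₀^π log(1 − 2x·cos θ + x²) · sin²θ dθ equals x²/2. -/
/-!
With `z = x e^{iθ}` one has `1 - 2x cos θ + x² = |1 - z|²`, so taking real parts in
`-log (1 - z) = ∑ zⁿ / n` gives `log (1 - 2x cos θ + x²) = -∑ 2xⁿ cos (nθ) / n`.
The series is dominated by `2|x|ⁿ`, so it may be integrated termwise against `sin² θ`,
and since `cos (nθ) sin² θ = cos (nθ)/2 - cos ((n+2)θ)/4 - cos ((n-2)θ)/4` only the term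
`n = 2` survives, contributing `π x² / 4`.
-/

open Real intervalIntegral

theorem integral_cos_int_mul_zero_pi (m : ℤ) :
    ∫ θ in (0:ℝ)..π, cos (m * θ) = if m = 0 then π else 0 := by
  split_ifs with hm
  · simp [hm]
  · rw [integral_comp_mul_left (fun t => cos t) (Int.cast_ne_zero.mpr hm), integral_cos]
    simp [sin_int_mul_pi]

theorem cos_mul_mul_sin_sq (a θ : ℝ) :
    cos (a * θ) * sin θ ^ 2
      = cos (a * θ) / 2 - cos ((a + 2) * θ) / 4 - cos ((a - 2) * θ) / 4 := by
  rw [add_mul, sub_mul, cos_add, cos_sub, cos_two_mul, sin_two_mul]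
  linear_combination cos (a * θ) * sin_sq_add_cos_sq θ

theorem integral_cos_nat_mul_mul_sin_sq (n : ℕ) :
    ∫ θ in (0:ℝ)..π, cos (n * θ) * sin θ ^ 2
      = if n = 0 then π / 2 else if n = 2 then -(π / 4) else 0 := by
  have hc : ∀ a : ℝ, IntervalIntegrable (fun θ => cos (a * θ)) MeasureTheory.volume 0 π :=
    fun a => (by fun_prop : Continuous fun θ => cos (a * θ)).intervalIntegrable _ _
  have hadd : (n : ℝ) + 2 = ((n + 2 : ℤ) : ℝ) := by push_cast; ring
  have hsub : (n : ℝ) - 2 = ((n - 2 : ℤ) : ℝ) := by push_cast; ring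
  rw [integral_congr fun θ _ => cos_mul_mul_sin_sq n θ,
    integral_sub (((hc _).div_const _).sub ((hc _).div_const _)) ((hc _).div_const _),
    integral_sub ((hc _).div_const _) ((hc _).div_const _), integral_div, integral_div,
    integral_div, hadd, hsub, ← Int.cast_natCast, integral_cos_int_mul_zero_pi,
    integral_cos_int_mul_zero_pi, integral_cos_int_mul_zero_pi]
  rcases eq_or_ne n 0 with rfl | hn0
  · norm_num
  rcases eq_or_ne n 2 with rfl | hn2
  · norm_num
  · have : (n : ℤ) + 2 ≠ 0 := by omega
    have : (n : ℤ) - 2 ≠ 0 := by omega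
    simp_all

theorem Complex.normSq_one_sub_ofReal_mul_exp (x θ : ℝ) :
    normSq (1 - x * exp (θ * I)) = 1 - 2 * x * Real.cos θ + x ^ 2 := by
  rw [normSq_apply]
  simp [exp_ofReal_mul_I_re, exp_ofReal_mul_I_im]
  linear_combination x ^ 2 * Real.sin_sq_add_cos_sq θ

/-- The `n = 0` term is `0` only because `(0 : ℝ)⁻¹ = 0`. -/
theorem hasSum_log_one_sub_two_mul_cos_add_sq {x : ℝ} (hx : |x| < 1) (θ : ℝ) :
    HasSum (fun n : ℕ => -2 * x ^ n / n * cos (n * θ)) (log (1 - 2 * x * cos θ + x ^ 2)) := by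
  set z : ℂ := x * Complex.exp (θ * Complex.I)
  have hz : ‖z‖ < 1 := by simpa [z, Complex.norm_exp_ofReal_mul_I] using hx
  have hre : ∀ n : ℕ, (z ^ n / n).re = x ^ n / n * cos (n * θ) := by
    intro n
    rw [Complex.div_natCast_re, mul_pow, ← Complex.exp_nat_mul, ← Complex.ofReal_pow,
      show (n : ℂ) * (θ * Complex.I) = ((n * θ : ℝ) : ℂ) * Complex.I by push_cast; ring,
      Complex.re_ofReal_mul, Complex.exp_ofReal_mul_I_re]
    ring
  have hlog : log (1 - 2 * x * cos θ + x ^ 2) = -2 * (-Complex.log (1 - z)).re := by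
    rw [← Complex.normSq_one_sub_ofReal_mul_exp, Complex.neg_re, Complex.log_re,
      Complex.normSq_eq_norm_sq, log_pow]
    push_cast; ring
  rw [hlog]
  have := (Complex.hasSum_re (Complex.hasSum_taylorSeries_neg_log hz)).mul_left (-2)
  simp only [hre] at this
  simpa only [mul_div_assoc, mul_assoc] using this

theorem integral_log_one_sub_two_mul_cos_add_sq_mul_sin_sq {x : ℝ} (hx : |x| < 1) :
    ∫ θ in (0:ℝ)..π, log (1 - 2 * x * cos θ + x ^ 2) * sin θ ^ 2 = π * x ^ 2 / 4 := by
  have hbound : ∀ (n : ℕ) θ, ‖-2 * x ^ n / n * cos (n * θ) * sin θ ^ 2‖ ≤ 2 * |x| ^ n := by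
    intro n θ
    have hcoef : |(n : ℝ)⁻¹| ≤ 1 := by rw [abs_inv, Nat.abs_cast]; exact Nat.cast_inv_le_one n
    rw [Real.norm_eq_abs, abs_mul, abs_mul, div_eq_mul_inv, abs_mul, abs_mul, abs_pow, abs_neg,
      abs_two, abs_sq]
    have hcos := abs_cos_le_one (n * θ)
    have hsin := sin_sq_le_one θ
    calc 2 * |x| ^ n * |(n : ℝ)⁻¹| * |cos (n * θ)| * sin θ ^ 2 ≤ 2 * |x| ^ n * 1 * 1 * 1 := by
          gcongr
      _ = 2 * |x| ^ n := by ring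
  have hterms : HasSum (fun n : ℕ => ∫ θ in (0:ℝ)..π, -2 * x ^ n / n * cos (n * θ) * sin θ ^ 2)
      (∫ θ in (0:ℝ)..π, log (1 - 2 * x * cos θ + x ^ 2) * sin θ ^ 2) :=
    hasSum_integral_of_dominated_convergence (fun n _ => 2 * |x| ^ n)
    (fun n => (by fun_prop : Continuous fun θ => -2 * x ^ n / n * cos (n * θ) * sin θ ^ 2)
      |>.aestronglyMeasurable)
    (fun n => .of_forall fun θ _ => hbound n θ)
    (.of_forall fun _ _ => (summable_geometric_of_lt_one (abs_nonneg x) hx).mul_left 2)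
    intervalIntegrable_const
    (.of_forall fun θ _ => (hasSum_log_one_sub_two_mul_cos_add_sq hx θ).mul_right (sin θ ^ 2))
  have hcoef : ∀ n : ℕ, ∫ θ in (0:ℝ)..π, -2 * x ^ n / n * cos (n * θ) * sin θ ^ 2
      = if n = 2 then π * x ^ 2 / 4 else 0 := by
    intro n
    simp_rw [mul_assoc (-2 * x ^ n / n)]
    rw [integral_const_mul, integral_cos_nat_mul_mul_sin_sq]
    rcases eq_or_ne n 2 with rfl | hn2
    · norm_num; ring
    · rcases eq_or_ne n 0 with rfl | hn0 <;> simp [*]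
  simp only [hcoef] at hterms
  exact hterms.unique (hasSum_ite_eq 2 _)

theorem stmt_0 (x : ℝ) (hx0 : 0 ≤ x) (hx1 : x < 1) :
    (2 / Real.pi) *
        ∫ θ in (0:ℝ)..Real.pi,
          Real.log (1 - 2 * x * Real.cos θ + x ^ 2) * (Real.sin θ) ^ 2
      = x ^ 2 / 2 := by
  rw [integral_log_one_sub_two_mul_cos_add_sq_mul_sin_sq (abs_lt.mpr ⟨by linarith, hx1⟩)]
  field_simp
  ring
end

section
/- For every real number x with 0 ≤ x < 1, the integral (2/π) ∫₀^π [ −log(1 − 2x·cos(2θ) + x²) − log(1 − x) ] · sin²θ dθ equals Σ_{ℓ=2}^∞ x^ℓ/ℓ, which equals −log(1 − x) − x. -/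
open Real MeasureTheory intervalIntegral

-- real log series
lemma hasSum_log_real {x : ℝ} (hx : |x| < 1) :
    HasSum (fun n : ℕ ↦ x ^ n / n) (-Real.log (1 - x)) := by
  have hx' : ‖(x : ℂ)‖ < 1 := by rwa [Complex.norm_real, Real.norm_eq_abs]
  have h := Complex.hasSum_taylorSeries_neg_log hx'
  have h2 := h.mapL Complex.reCLM
  convert h2 using 1 with n
  · funext n
    simp only [Complex.reCLM_apply]
    rw [show ((x:ℂ)^n / n) = ((x^n/n : ℝ) : ℂ) by push_cast; ring]
    simp [← Complex.ofReal_pow]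
  · simp only [Complex.reCLM_apply, Complex.neg_re, Complex.log_re]
    rw [show (1 - (x:ℂ)) = ((1-x : ℝ):ℂ) by push_cast; ring]
    rw [Complex.norm_real, Real.norm_eq_abs, abs_of_pos (by cases abs_lt.mp hx; linarith)]

lemma hasSum_cos_part {x θ : ℝ} (hx : |x| < 1) :
    HasSum (fun n : ℕ ↦ x ^ n * Real.cos (2 * n * θ) / n)
      (-Real.log (1 - 2 * x * Real.cos (2 * θ) + x ^ 2) / 2) := by
  set z : ℂ := (x : ℂ) * Complex.exp ((2 * θ : ℝ) * Complex.I) with hz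
  have hznorm : ‖z‖ < 1 := by
    rw [hz, norm_mul, Complex.norm_exp_ofReal_mul_I, mul_one, Complex.norm_real,
      Real.norm_eq_abs]
    exact hx
  have h := (Complex.hasSum_taylorSeries_neg_log hznorm).mapL Complex.reCLM
  have hzn : ∀ n : ℕ, z ^ n = ((x ^ n : ℝ) : ℂ) * Complex.exp ((2 * n * θ : ℝ) * Complex.I) := by
    intro n
    rw [hz, mul_pow, ← Complex.exp_nat_mul]
    push_cast
    ring_nf
  have hterm : ∀ n : ℕ, Complex.reCLM (z ^ n / n) = x ^ n * Real.cos (2 * n * θ) / n := by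
    intro n
    have e : z ^ n / (n : ℂ)
        = ((x ^ n / n : ℝ) : ℂ) * Complex.exp ((2 * n * θ : ℝ) * Complex.I) := by
      rw [hzn n]; push_cast; ring
    rw [Complex.reCLM_apply, e, Complex.re_ofReal_mul, Complex.exp_ofReal_mul_I_re]
    ring
  have hns : Complex.normSq (1 - z) = 1 - 2 * x * Real.cos (2 * θ) + x ^ 2 := by
    rw [hz]
    simp only [Complex.normSq_apply, Complex.sub_re, Complex.sub_im, Complex.one_re,
      Complex.one_im, Complex.mul_re, Complex.mul_im, Complex.ofReal_re, Complex.ofReal_im,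
      Complex.exp_ofReal_mul_I_re, Complex.exp_ofReal_mul_I_im]
    have := Real.sin_sq_add_cos_sq (2 * θ)
    nlinarith [this]
  have habs : Complex.reCLM (-Complex.log (1 - z))
      = -Real.log (1 - 2 * x * Real.cos (2 * θ) + x ^ 2) / 2 := by
    simp only [Complex.reCLM_apply, Complex.neg_re, Complex.log_re]
    rw [← hns, ← Complex.sq_norm, Real.log_pow]
    push_cast
    ring
  rw [← habs]
  convert h using 1
  funext n
  rw [hterm n]

lemma int_cos_k (k : ℕ) (hk : k ≠ 0) :
    ∫ θ in (0:ℝ)..Real.pi, Real.cos (2 * k * θ) = 0 := by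
  have hc : (2 * k : ℝ) ≠ 0 := by positivity
  rw [show (fun θ : ℝ ↦ Real.cos (2 * k * θ)) = fun θ : ℝ ↦ Real.cos ((2 * k) * θ) from rfl,
    intervalIntegral.integral_comp_mul_left Real.cos hc]
  rw [mul_zero, integral_cos, Real.sin_zero, sub_zero,
    show (2 * (k:ℝ)) * Real.pi = ((2 * k : ℕ) : ℝ) * Real.pi by push_cast; ring,
    Real.sin_nat_mul_pi, smul_zero]

lemma trig_id (m : ℕ) (θ : ℝ) :
    (2 * Real.cos (2 * (m+1 : ℕ) * θ) + 1) * Real.sin θ ^ 2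
      = Real.cos (2 * (m+1 : ℕ) * θ) - Real.cos (2 * (m+2 : ℕ) * θ) / 2
          - Real.cos (2 * (m : ℕ) * θ) / 2 + Real.sin θ ^ 2 := by
  have e1 : 2 * ((m:ℝ)+2) * θ = 2 * ((m:ℝ)+1) * θ + 2 * θ := by ring
  have e2 : 2 * (m:ℝ) * θ = 2 * ((m:ℝ)+1) * θ - 2 * θ := by ring
  push_cast
  rw [e1, e2, Real.cos_add, Real.cos_sub, Real.cos_two_mul]
  linear_combination (2 * Real.cos (2 * ((m:ℝ)+1) * θ)) * (Real.sin_sq_add_cos_sq θ)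

lemma intJ (n : ℕ) (hn : 1 ≤ n) :
    ∫ θ in (0:ℝ)..Real.pi, (2 * Real.cos (2 * n * θ) + 1) * Real.sin θ ^ 2
      = if n = 1 then 0 else Real.pi / 2 := by
  obtain ⟨m, rfl⟩ := Nat.exists_eq_add_of_le hn
  rw [add_comm 1 m]
  have hcong : ∀ θ ∈ Set.uIcc (0:ℝ) Real.pi,
      (2 * Real.cos (2 * (m+1:ℕ) * θ) + 1) * Real.sin θ ^ 2
        = Real.cos (2 * (m+1:ℕ) * θ) - Real.cos (2 * (m+2:ℕ) * θ) / 2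
            - Real.cos (2 * (m:ℕ) * θ) / 2 + Real.sin θ ^ 2 := fun θ _ ↦ trig_id m θ
  rw [intervalIntegral.integral_congr hcong]
  have i1 : IntervalIntegrable (fun θ : ℝ ↦ Real.cos (2 * (m+1:ℕ) * θ)) volume 0 Real.pi :=
    (Real.continuous_cos.comp (by continuity)).intervalIntegrable _ _
  have i2 : IntervalIntegrable (fun θ : ℝ ↦ Real.cos (2 * (m+2:ℕ) * θ) / 2) volume 0 Real.pi :=
    ((Real.continuous_cos.comp (by continuity)).div_const 2).intervalIntegrable _ _
  have i3 : IntervalIntegrable (fun θ : ℝ ↦ Real.cos (2 * (m:ℕ) * θ) / 2) volume 0 Real.pi :=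
    ((Real.continuous_cos.comp (by continuity)).div_const 2).intervalIntegrable _ _
  have i4 : IntervalIntegrable (fun θ : ℝ ↦ Real.sin θ ^ 2) volume 0 Real.pi :=
    (Real.continuous_sin.pow 2).intervalIntegrable _ _
  rw [intervalIntegral.integral_add ((i1.sub i2).sub i3) i4,
    intervalIntegral.integral_sub (i1.sub i2) i3, intervalIntegral.integral_sub i1 i2]
  rw [integral_sin_sq]
  rw [intervalIntegral.integral_div, intervalIntegral.integral_div]
  rw [int_cos_k (m+1) (by omega), int_cos_k (m+2) (by omega)]
  rcases Nat.eq_zero_or_pos m with rfl | hm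
  · norm_num
  · rw [int_cos_k m (by omega)]
    have : m + 1 ≠ 1 := by omega
    simp [this, hm.ne']

lemma intF (x : ℝ) (n : ℕ) :
    ∫ θ in (0:ℝ)..Real.pi, x ^ n / n * ((2 * Real.cos (2 * n * θ) + 1) * Real.sin θ ^ 2)
      = if n ≤ 1 then 0 else x ^ n / n * (Real.pi / 2) := by
  rw [intervalIntegral.integral_const_mul]
  rcases Nat.eq_zero_or_pos n with rfl | hn
  · simp
  · rw [intJ n hn]
    rcases eq_or_ne n 1 with rfl | hne
    · simp
    · have : ¬ n ≤ 1 := by omega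
      simp [hne, this]

theorem stmt_1 (x : ℝ) (hx0 : 0 ≤ x) (hx1 : x < 1) :
    ((2 / Real.pi) *
        ∫ θ in (0:ℝ)..Real.pi,
          (-Real.log (1 - 2 * x * Real.cos (2 * θ) + x ^ 2) - Real.log (1 - x)) *
            (Real.sin θ) ^ 2)
      = (∑' n : ℕ, x ^ (n + 2) / (n + 2)) ∧
    (∑' n : ℕ, x ^ (n + 2) / (n + 2)) = -Real.log (1 - x) - x := by
  have hxabs : |x| < 1 := abs_lt.mpr ⟨by linarith, hx1⟩
  have hlog : HasSum (fun n : ℕ ↦ x ^ n / n) (-Real.log (1 - x)) := hasSum_log_real hxabs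
  -- second conjunct
  have htail : HasSum (fun n : ℕ ↦ x ^ (n + 2) / (n + 2)) (-Real.log (1 - x) - x) := by
    have := (hasSum_nat_add_iff' (f := fun n : ℕ ↦ x ^ n / n) 2).mpr hlog
    simpa [Finset.sum_range_succ] using this
  refine ⟨?_, htail.tsum_eq⟩
  -- pointwise HasSum for the integrand
  set F : ℕ → ℝ → ℝ := fun n θ ↦ x ^ n / n * ((2 * Real.cos (2 * n * θ) + 1) * Real.sin θ ^ 2)
    with hF
  have hpt : ∀ θ : ℝ, HasSum (fun n ↦ F n θ)
      ((-Real.log (1 - 2 * x * Real.cos (2 * θ) + x ^ 2) - Real.log (1 - x)) *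
        Real.sin θ ^ 2) := by
    intro θ
    have h1 := (hasSum_cos_part (θ := θ) hxabs).mul_left 2
    have h2 := (h1.add hlog).mul_right (Real.sin θ ^ 2)
    convert h2 using 2 with n
    · rfl
    · simp only [hF]
      ring
    · ring
  -- interchange sum and integral
  have hmeas : ∀ n : ℕ, Continuous (F n) := by
    intro n; simp only [hF]; fun_prop
  have hInt : ∀ n : ℕ, IntegrableOn (F n) (Set.Ioc 0 Real.pi) volume := fun n ↦
    ((hmeas n).intervalIntegrable 0 Real.pi).1
  have hbound : ∀ n : ℕ, ∀ θ : ℝ, ‖F n θ‖ ≤ 3 * x ^ n := by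
    intro n θ
    have h1 : |x ^ n / n| ≤ x ^ n := by
      rcases n with _ | m
      · simp
      · rw [abs_of_nonneg (by positivity)]
        apply div_le_self (by positivity)
        exact_mod_cast Nat.one_le_iff_ne_zero.mpr (Nat.succ_ne_zero m)
    have h2 : |2 * Real.cos (2 * n * θ) + 1| ≤ 3 := by
      have hc1 := Real.neg_one_le_cos (2 * n * θ)
      have hc2 := Real.cos_le_one (2 * n * θ)
      rw [abs_le]; constructor <;> linarith
    have h3 : |Real.sin θ ^ 2| ≤ 1 := by
      rw [abs_of_nonneg (sq_nonneg _)]; exact Real.sin_sq_le_one θ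
    have hxn : (0:ℝ) ≤ x ^ n := by positivity
    calc ‖F n θ‖ = |x ^ n / n| * (|2 * Real.cos (2 * n * θ) + 1| * |Real.sin θ ^ 2|) := by
          simp only [hF, Real.norm_eq_abs, abs_mul]
      _ ≤ x ^ n * (3 * 1) := by
          apply mul_le_mul h1 (mul_le_mul h2 h3 (abs_nonneg _) (by norm_num))
            (by positivity) hxn
      _ = 3 * x ^ n := by ring
  have hsum : Summable (fun n : ℕ ↦ ∫ θ in Set.Ioc (0:ℝ) Real.pi, ‖F n θ‖) := by
    refine Summable.of_nonneg_of_le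
      (fun n ↦ integral_nonneg fun θ ↦ norm_nonneg _) (fun n ↦ ?_)
      (((summable_geometric_of_lt_one hx0 hx1).mul_left (Real.pi * 3)) :)
    have hc : IntegrableOn (fun _ : ℝ ↦ 3 * x ^ n) (Set.Ioc 0 Real.pi) volume := by
      apply integrableOn_const measure_Ioc_lt_top.ne
    calc (∫ θ in Set.Ioc (0:ℝ) Real.pi, ‖F n θ‖)
        ≤ ∫ _ in Set.Ioc (0:ℝ) Real.pi, 3 * x ^ n :=
          setIntegral_mono_on (hInt n).norm hc measurableSet_Ioc fun θ _ ↦ hbound n θ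
      _ = Real.pi * (3 * x ^ n) := by
          rw [setIntegral_const, Real.volume_real_Ioc_of_le Real.pi_pos.le, sub_zero,
            smul_eq_mul]
      _ = Real.pi * 3 * x ^ n := by ring
  have hinter := integral_tsum_of_summable_integral_norm (fun n ↦ hInt n) hsum
  -- value of the series of integrals
  have hv : HasSum (fun n : ℕ ↦ if n ≤ 1 then 0 else x ^ n / n * (Real.pi / 2))
      ((-Real.log (1 - x) - x) * (Real.pi / 2)) := by
    refine (hasSum_nat_add_iff'
      (f := fun n : ℕ ↦ if n ≤ 1 then 0 else x ^ n / n * (Real.pi / 2)) 2).mp ?_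
    have hz : ∑ i ∈ Finset.range 2,
        (if i ≤ 1 then (0:ℝ) else x ^ i / i * (Real.pi / 2)) = 0 := by
      simp [Finset.sum_range_succ]
    rw [hz, sub_zero]
    have := htail.mul_right (Real.pi / 2)
    convert this using 2 with n
    · rfl
    have : ¬ (n + 2 ≤ 1) := by omega
    simp [this]
  -- put everything together
  have key : (∫ θ in (0:ℝ)..Real.pi,
      (-Real.log (1 - 2 * x * Real.cos (2 * θ) + x ^ 2) - Real.log (1 - x)) *
        Real.sin θ ^ 2) = (-Real.log (1 - x) - x) * (Real.pi / 2) := by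
    rw [intervalIntegral.integral_of_le Real.pi_pos.le]
    have hcongr : ∀ θ : ℝ,
        (-Real.log (1 - 2 * x * Real.cos (2 * θ) + x ^ 2) - Real.log (1 - x)) *
          Real.sin θ ^ 2 = ∑' n, F n θ := fun θ ↦ ((hpt θ).tsum_eq).symm
    rw [show (fun θ ↦ (-Real.log (1 - 2 * x * Real.cos (2 * θ) + x ^ 2) -
        Real.log (1 - x)) * Real.sin θ ^ 2) = fun θ ↦ ∑' n, F n θ from funext hcongr]
    rw [← hinter, ← hv.tsum_eq]
    congr 1
    funext n
    rw [← intervalIntegral.integral_of_le Real.pi_pos.le]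
    exact intF x n
  rw [key, htail.tsum_eq]
  field_simp
end

section
/- Let r ∈ {1,2}, σ > 1/2, A > 0, and for each prime p let x_p = p^{−σ} and 𝒢_p(θ) = −log(1 − 2 x_p cos(rθ) + x_p²) − δ·log(1 − x_p), with δ = 1 if r = 2 and δ = 0 otherwise. Then the supremum over all finite sets P of primes of the product Π_{p ∈ P} ∫₀^π exp(2A·𝒢_p(θ)) (2/π) sin²θ dθ is finite. -/
/-!
Write `x = p^{-σ}` and `δ = [r = 2]`. Up to `O(x²)`, `𝒢_p(θ)` is the linear term
`x (2 cos rθ + δ)`, whose Sato–Tate average vanishes because `∫ cos(rθ) dST = -δ/2`.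
Expanding `exp (2A 𝒢_p)` to second order therefore gives `∫ exp (2A 𝒢_p) dST ≤ 1 + K x²`
with `K` depending only on `A`, uniformly in `p`; so the product over any finite set of primes
is at most `exp (K ∑ n^{-2σ})`, which is finite since `2σ > 1`.
-/

open Real

lemma exp_le_one_add_add_sq_mul_exp_abs (t : ℝ) : exp t ≤ 1 + t + t ^ 2 * exp |t| := by
  rcases le_or_gt |t| 1 with ht | ht
  · have hquad := (abs_le.1 (abs_exp_sub_one_sub_id_le ht)).2
    nlinarith [one_le_exp (abs_nonneg t)]
  · have hsq : 1 ≤ t ^ 2 := by nlinarith [sq_abs t, abs_nonneg t]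
    rcases le_or_gt 0 t with h0 | h0
    · rw [abs_of_nonneg h0]
      nlinarith [exp_pos t]
    · have h1 : exp t ≤ 1 := exp_le_one_iff.2 h0.le
      nlinarith [one_le_exp (abs_nonneg t), abs_of_neg h0]

lemma sub_one_sub_log_le {y : ℝ} (hy : 0 < y) : y - 1 - log y ≤ (y - 1) ^ 2 / y := by
  have h := one_sub_inv_le_log_of_pos hy
  have hid : (y - 1) ^ 2 / y = y - 1 - (1 - y⁻¹) := by field_simp
  linarith

lemma sq_one_sub_le {x c : ℝ} (hx : 0 ≤ x) (hc : c ≤ 1) :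
    (1 - x) ^ 2 ≤ 1 - 2 * x * c + x ^ 2 := by
  nlinarith [mul_le_mul_of_nonneg_left hc hx]

lemma abs_neg_log_one_sub_two_mul_add_sq_sub_le {x c : ℝ} (hx0 : 0 ≤ x) (hx : x ≤ 3 / 4)
    (hc : |c| ≤ 1) : |-log (1 - 2 * x * c + x ^ 2) - 2 * x * c| ≤ 144 * x ^ 2 := by
  obtain ⟨hc1, hc2⟩ := abs_le.1 hc
  set y := 1 - 2 * x * c + x ^ 2
  have hy : 1 / 16 ≤ y := by nlinarith [sq_one_sub_le hx0 hc2]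
  have hy0 : 0 < y := by linarith
  have hdev : (y - 1) ^ 2 ≤ 9 * x ^ 2 := by
    have : |y - 1| ≤ 3 * x := by
      rw [abs_le]; constructor <;> nlinarith [mul_le_mul_of_nonneg_left hc1 hx0,
        mul_le_mul_of_nonneg_left hc2 hx0]
    nlinarith [sq_abs (y - 1), abs_nonneg (y - 1)]
  have hupper : (y - 1) ^ 2 / y ≤ 144 * x ^ 2 := by
    rw [div_le_iff₀ hy0]; nlinarith [sq_nonneg x]
  have hlog := log_le_sub_one_of_pos hy0
  have hlog' := sub_one_sub_log_le hy0
  rw [abs_le]; constructor <;> nlinarith [sq_nonneg x]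

lemma abs_neg_log_one_sub_sub_le {x : ℝ} (hx : x ≤ 3 / 4) :
    |-log (1 - x) - x| ≤ 4 * x ^ 2 := by
  have hy0 : 0 < 1 - x := by linarith
  have hlog := log_le_sub_one_of_pos hy0
  have hlog' := sub_one_sub_log_le hy0
  have hupper : (1 - x - 1) ^ 2 / (1 - x) ≤ 4 * x ^ 2 := by
    rw [div_le_iff₀ hy0]; nlinarith [sq_nonneg x]
  rw [abs_le]; constructor <;> nlinarith [sq_nonneg x]

lemma exp_mul_le_one_add_mul_add_sq {s G L a b x : ℝ} (hs : 0 ≤ s) (hb : 0 ≤ b) (hx : x ≤ 1)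
    (hGL : |G - L| ≤ a * x ^ 2) (hG : |G| ≤ b * x) :
    exp (s * G) ≤ 1 + s * L + (s * a + (s * b) ^ 2 * exp (s * b)) * x ^ 2 := by
  have hlin : s * G ≤ s * L + s * a * x ^ 2 := by
    nlinarith [mul_le_mul_of_nonneg_left (abs_le.1 hGL).2 hs]
  have hsq : (s * G) ^ 2 ≤ (s * b) ^ 2 * x ^ 2 := by
    rw [mul_pow, mul_pow, mul_assoc, ← mul_pow b]
    exact mul_le_mul_of_nonneg_left (sq_le_sq' (abs_le.1 hG).1 (abs_le.1 hG).2) (sq_nonneg s)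
  have hexp : exp |s * G| ≤ exp (s * b) := by
    rw [exp_le_exp, abs_mul, abs_of_nonneg hs]
    exact mul_le_mul_of_nonneg_left (hG.trans (mul_le_of_le_one_right hb hx)) hs
  calc exp (s * G) ≤ 1 + s * G + (s * G) ^ 2 * exp |s * G| :=
        exp_le_one_add_add_sq_mul_exp_abs _
    _ ≤ 1 + (s * L + s * a * x ^ 2) + (s * b) ^ 2 * x ^ 2 * exp (s * b) := by
        gcongr
    _ = 1 + s * L + (s * a + (s * b) ^ 2 * exp (s * b)) * x ^ 2 := by ring

lemma rpow_neg_sq {y : ℝ} (hy : 0 ≤ y) (σ : ℝ) : (y ^ (-σ)) ^ 2 = y ^ (-(2 * σ)) := by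
  rw [← rpow_mul_natCast hy]; norm_num [mul_comm]

lemma rpow_neg_le_three_quarters {y σ : ℝ} (hy : 2 ≤ y) (hσ : 1 / 2 < σ) : y ^ (-σ) ≤ 3 / 4 := by
  have hy0 : 0 < y := by linarith
  have hsq : (y ^ (-σ)) ^ 2 ≤ 1 / 2 := by
    calc (y ^ (-σ)) ^ 2 = y ^ (-(2 * σ)) := rpow_neg_sq hy0.le σ
      _ ≤ y ^ (-1 : ℝ) := rpow_le_rpow_of_exponent_le (by linarith) (by linarith)
      _ ≤ 1 / 2 := by rw [rpow_neg_one, one_div]; exact inv_anti₀ (by norm_num) hy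
  nlinarith [rpow_nonneg hy0.le (-σ)]

lemma prod_le_exp_tsum {ι : Type*} (P : Finset ι) {f g : ι → ℝ} (hg : Summable g)
    (hg0 : ∀ i, 0 ≤ g i) (hf0 : ∀ i ∈ P, 0 ≤ f i) (hfg : ∀ i ∈ P, f i ≤ 1 + g i) :
    ∏ i ∈ P, f i ≤ exp (∑' i, g i) :=
  (Finset.prod_le_prod hf0 hfg).trans <| (prod_one_add_le_exp_sum P hg0).trans <|
    exp_le_exp.2 <| hg.sum_le_tsum P fun i _ ↦ hg0 i

noncomputable section

namespace SatoTate

def satoTateDensity (θ : ℝ) : ℝ := 2 / π * sin θ ^ 2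

@[fun_prop]
lemma continuous_satoTateDensity : Continuous satoTateDensity := by
  unfold satoTateDensity; fun_prop

/-- `𝒢_p(θ)` with `x = p^{-σ}`. -/
def logFactor (r : ℕ) (x θ : ℝ) : ℝ :=
  -log (1 - 2 * x * cos (r * θ) + x ^ 2) - (if r = 2 then (1 : ℝ) else 0) * log (1 - x)

def logFactorLinear (r : ℕ) (x θ : ℝ) : ℝ := x * (2 * cos (r * θ) + if r = 2 then 1 else 0)

def expMoment (r : ℕ) (A x : ℝ) : ℝ :=
  ∫ θ in (0 : ℝ)..π, exp (2 * A * logFactor r x θ) * satoTateDensity θ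

@[fun_prop]
lemma continuous_logFactorLinear (r : ℕ) (x : ℝ) : Continuous (logFactorLinear r x) := by
  unfold logFactorLinear; fun_prop

lemma continuous_logFactor (r : ℕ) {x : ℝ} (hx0 : 0 ≤ x) (hx : x < 1) :
    Continuous (logFactor r x) := by
  have hpos (θ : ℝ) : 1 - 2 * x * cos (r * θ) + x ^ 2 ≠ 0 := by
    nlinarith [sq_one_sub_le hx0 (cos_le_one (r * θ))]
  unfold logFactor
  exact ((continuous_const.sub (continuous_const.mul (by fun_prop))).add continuous_const
    |>.log hpos).neg.sub continuous_const

lemma abs_logFactor_sub_logFactorLinear_le (r : ℕ) {x : ℝ} (hx0 : 0 ≤ x) (hx : x ≤ 3 / 4)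
    (θ : ℝ) : |logFactor r x θ - logFactorLinear r x θ| ≤ 148 * x ^ 2 := by
  have h₁ := abs_neg_log_one_sub_two_mul_add_sq_sub_le hx0 hx (abs_cos_le_one (r * θ))
  have h₂ := abs_neg_log_one_sub_sub_le hx
  have hδ : |(if r = 2 then (1 : ℝ) else 0)| ≤ 1 := by split_ifs <;> simp
  calc |logFactor r x θ - logFactorLinear r x θ|
      = |(-log (1 - 2 * x * cos (r * θ) + x ^ 2) - 2 * x * cos (r * θ))
          + (if r = 2 then (1 : ℝ) else 0) * (-log (1 - x) - x)| := by
        unfold logFactor logFactorLinear; ring_nf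
    _ ≤ 144 * x ^ 2 + 1 * (4 * x ^ 2) := by
        refine (abs_add_le _ _).trans (add_le_add h₁ ?_)
        rw [abs_mul]
        exact mul_le_mul hδ h₂ (abs_nonneg _) zero_le_one
    _ = 148 * x ^ 2 := by ring

lemma abs_logFactorLinear_le (r : ℕ) {x : ℝ} (hx0 : 0 ≤ x) (θ : ℝ) :
    |logFactorLinear r x θ| ≤ 3 * x := by
  have hδ : |(if r = 2 then (1 : ℝ) else 0)| ≤ 1 := by split_ifs <;> simp
  have hcos : |2 * cos (r * θ) + if r = 2 then (1 : ℝ) else 0| ≤ 3 := by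
    calc _ ≤ |2 * cos (r * θ)| + |(if r = 2 then (1 : ℝ) else 0)| := abs_add_le _ _
      _ ≤ 2 * 1 + 1 := by
        rw [abs_mul, abs_two]; gcongr; exact abs_cos_le_one _
      _ = 3 := by norm_num
  rw [logFactorLinear, abs_mul, abs_of_nonneg hx0, mul_comm]
  exact mul_le_mul_of_nonneg_right hcos hx0

lemma integral_satoTateDensity : ∫ θ in (0 : ℝ)..π, satoTateDensity θ = 1 := by
  simp only [satoTateDensity, intervalIntegral.integral_const_mul, integral_sin_sq]
  field_simp
  simp

lemma integral_cos_mul_satoTateDensity {r : ℕ} (hr : r = 1 ∨ r = 2) :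
    ∫ θ in (0 : ℝ)..π, cos (r * θ) * satoTateDensity θ = -(if r = 2 then 1 else 0) / 2 := by
  unfold satoTateDensity
  rcases hr with rfl | rfl
  · have hid (θ : ℝ) : cos ((1 : ℕ) * θ) * (2 / π * sin θ ^ 2) = 2 / π * (sin θ ^ 2 * cos θ) := by
      rw [Nat.cast_one, one_mul]; ring
    simp_rw [hid]
    simp
  · have hid (θ : ℝ) : cos ((2 : ℕ) * θ) * (2 / π * sin θ ^ 2)
        = 2 / π * sin θ ^ 2 - 4 / π * sin θ ^ 4 := by
      push_cast
      rw [cos_two_mul']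
      linear_combination (2 / π * sin θ ^ 2) * sin_sq_add_cos_sq θ
    have hsin4 : ∫ θ in (0 : ℝ)..π, sin θ ^ 4 = 3 * π / 8 := by
      rw [integral_sin_pow (n := 2)]; simp
      ring
    simp_rw [hid]
    rw [intervalIntegral.integral_sub ((by fun_prop : Continuous _).intervalIntegrable _ _)
      ((by fun_prop : Continuous _).intervalIntegrable _ _)]
    simp only [intervalIntegral.integral_const_mul, integral_sin_sq, hsin4]
    field_simp
    simp
    ring

lemma integral_logFactorLinear_mul_satoTateDensity {r : ℕ} (hr : r = 1 ∨ r = 2) (x : ℝ) :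
    ∫ θ in (0 : ℝ)..π, logFactorLinear r x θ * satoTateDensity θ = 0 := by
  have hsplit (θ : ℝ) : logFactorLinear r x θ * satoTateDensity θ
      = 2 * x * (cos (r * θ) * satoTateDensity θ)
        + x * (if r = 2 then 1 else 0) * satoTateDensity θ := by
    unfold logFactorLinear; ring
  simp_rw [hsplit]
  rw [intervalIntegral.integral_add ((by fun_prop : Continuous _).intervalIntegrable _ _)
    ((continuous_satoTateDensity.const_mul _).intervalIntegrable _ _),
    intervalIntegral.integral_const_mul, intervalIntegral.integral_const_mul,
    integral_cos_mul_satoTateDensity hr, integral_satoTateDensity]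
  ring

lemma expMoment_nonneg (r : ℕ) (A x : ℝ) : 0 ≤ expMoment r A x :=
  intervalIntegral.integral_nonneg pi_pos.le fun θ _ ↦
    mul_nonneg (exp_pos _).le (by unfold satoTateDensity; positivity)

lemma exists_expMoment_le {r : ℕ} (hr : r = 1 ∨ r = 2) {A : ℝ} (hA : 0 ≤ A) :
    ∃ K, 0 ≤ K ∧ ∀ x, 0 ≤ x → x ≤ 3 / 4 → expMoment r A x ≤ 1 + K * x ^ 2 := by
  refine ⟨2 * A * 148 + (2 * A * 114) ^ 2 * exp (2 * A * 114), by positivity, fun x hx0 hx ↦ ?_⟩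
  set K := 2 * A * 148 + (2 * A * 114) ^ 2 * exp (2 * A * 114)
  have hpointwise (θ : ℝ) :
      exp (2 * A * logFactor r x θ) ≤ 1 + 2 * A * logFactorLinear r x θ + K * x ^ 2 := by
    have hGL := abs_logFactor_sub_logFactorLinear_le r hx0 hx θ
    refine exp_mul_le_one_add_mul_add_sq (by positivity) (by norm_num) (by linarith) hGL ?_
    calc |logFactor r x θ| ≤ |logFactorLinear r x θ| + |logFactor r x θ - logFactorLinear r x θ| :=
          by linarith [abs_sub_abs_le_abs_sub (logFactor r x θ) (logFactorLinear r x θ)]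
      _ ≤ 3 * x + 148 * x ^ 2 := add_le_add (abs_logFactorLinear_le r hx0 θ) hGL
      _ ≤ 114 * x := by nlinarith
  calc expMoment r A x
      ≤ ∫ θ in (0 : ℝ)..π, (1 + 2 * A * logFactorLinear r x θ + K * x ^ 2) * satoTateDensity θ :=
        intervalIntegral.integral_mono_on pi_pos.le
          ((((continuous_logFactor r hx0 (by linarith)).const_mul _).rexp.mul
            continuous_satoTateDensity).intervalIntegrable _ _)
          (Continuous.intervalIntegrable (by fun_prop) _ _)
          fun θ _ ↦ mul_le_mul_of_nonneg_right (hpointwise θ)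
            (by unfold satoTateDensity; positivity)
    _ = ∫ θ in (0 : ℝ)..π, ((1 + K * x ^ 2) * satoTateDensity θ
          + 2 * A * (logFactorLinear r x θ * satoTateDensity θ)) := by
        congr 1; ext θ; ring
    _ = 1 + K * x ^ 2 := by
        rw [intervalIntegral.integral_add (Continuous.intervalIntegrable (by fun_prop) _ _)
          (Continuous.intervalIntegrable (by fun_prop) _ _)]
        simp only [intervalIntegral.integral_const_mul, integral_satoTateDensity,
          integral_logFactorLinear_mul_satoTateDensity hr]
        ring

end SatoTate

end

open SatoTate in
theorem stmt_16 (r : ℕ) (hr : r = 1 ∨ r = 2) (σ : ℝ) (hσ : 1/2 < σ) (A : ℝ) (hA : 0 < A) :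
    ∃ B : ℝ, ∀ P : Finset ℕ, (∀ p ∈ P, p.Prime) →
      (∏ p ∈ P, ∫ θ in (0:ℝ)..Real.pi,
          Real.exp (2 * A *
            (-Real.log (1 - 2 * (p : ℝ) ^ (-σ) * Real.cos (r * θ) + ((p : ℝ) ^ (-σ)) ^ 2)
              - (if r = 2 then (1:ℝ) else 0) * Real.log (1 - (p : ℝ) ^ (-σ)))) *
          ((2 / Real.pi) * (Real.sin θ) ^ 2)) ≤ B := by
  obtain ⟨K, hK0, hK⟩ := exists_expMoment_le hr hA.le
  have hsum : Summable fun n : ℕ ↦ K * (n : ℝ) ^ (-(2 * σ)) :=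
    (summable_nat_rpow.2 (by linarith)).mul_left K
  refine ⟨exp (∑' n : ℕ, K * (n : ℝ) ^ (-(2 * σ))), fun P hP ↦ ?_⟩
  change ∏ p ∈ P, expMoment r A ((p : ℝ) ^ (-σ)) ≤ _
  refine prod_le_exp_tsum P hsum (fun n ↦ by positivity) (fun p _ ↦ expMoment_nonneg r A _)
    fun p hp ↦ ?_
  have hp : (2 : ℝ) ≤ p := by exact_mod_cast (hP p hp).two_le
  rw [← rpow_neg_sq (Nat.cast_nonneg p)]
  exact hK _ (by positivity) (rpow_neg_le_three_quarters hp hσ)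
end
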